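/- For every integer k ≥ 1, ∫_0^π W_k(0,η) · (∂W_k/∂ξ)(0,η) dη = −(π / 2^{2k-1}) · ∑_{j=0}^{⌊(k-1)/2⌋} (k−2j)·C(k,j)², where (∂W_k/∂ξ)(0,η) denotes the partial derivative of W_k with respect to its first variable evaluated at (0,η). -/

import Mathlib

/-- The profile `W_k` in elliptic coordinates:
`W_k(ξ,η) = 2^{1-k} · ∑_{j=0}^{⌊(k-1)/2⌋} C(k,j)·exp(−(k−2j)ξ)·sin((k−2j)η)`. -/
noncomputable def Wk (k : ℕ) (ξ η : ℝ) : ℝ :=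
  (2 : ℝ) ^ (1 - (k : ℤ)) *
    ∑ j ∈ Finset.range ((k - 1) / 2 + 1),
      (Nat.choose k j : ℝ) * Real.exp (-(((k : ℝ) - 2 * j)) * ξ) *
        Real.sin (((k : ℝ) - 2 * j) * η)

/-!
Both `W_k(0,·)` and `∂_ξ W_k(0,·)` are sine polynomials in the distinct positive frequencies
`k - 2j`, with coefficients `2^{1-k} C(k,j)` and `-(k - 2j) 2^{1-k} C(k,j)`. By orthogonality
of `sin (m x)` and `sin (n x)` on `[0, π]`, the integral of their product is `π / 2` times the
sum of the products of matching coefficients.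
-/

open Real intervalIntegral Finset

theorem integral_cos_int_mul (p : ℤ) :
    ∫ x in (0 : ℝ)..π, cos (p * x) = if p = 0 then π else 0 := by
  split_ifs with hp
  · simp [hp]
  · have hp' : (p : ℝ) ≠ 0 := Int.cast_ne_zero.mpr hp
    rw [integral_comp_mul_left cos hp', integral_cos]
    simp [sin_int_mul_pi]

theorem integral_sin_int_mul_mul_sin_int_mul {m n : ℤ} (hm : 0 < m) (hn : 0 < n) :
    ∫ x in (0 : ℝ)..π, sin (m * x) * sin (n * x) = if m = n then π / 2 else 0 := by
  have product_to_sum : ∀ x : ℝ, sin (m * x) * sin (n * x)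
      = (cos (((m - n : ℤ) : ℝ) * x) - cos (((m + n : ℤ) : ℝ) * x)) / 2 := by
    intro x
    push_cast
    rw [sub_mul, add_mul, cos_sub, cos_add]
    ring
  have hcos : ∀ p : ℤ, IntervalIntegrable (fun x => cos (p * x)) MeasureTheory.volume 0 π :=
    fun p => (continuous_cos.comp (continuous_const.mul continuous_id)).intervalIntegrable _ _
  have hmn : m + n ≠ 0 := by omega
  simp only [product_to_sum]
  rw [integral_div, integral_sub (hcos _) (hcos _), integral_cos_int_mul, integral_cos_int_mul,
    if_neg hmn]
  simp only [sub_eq_zero]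
  split_ifs <;> ring

theorem integral_sum_sin_mul_sum_sin {ι : Type*} {s : Finset ι} {n : ι → ℤ}
    (hn : ∀ i ∈ s, 0 < n i) (hinj : Set.InjOn n s) (a b : ι → ℝ) :
    ∫ x in (0 : ℝ)..π, (∑ i ∈ s, a i * sin (n i * x)) * (∑ j ∈ s, b j * sin (n j * x))
      = π / 2 * ∑ i ∈ s, a i * b i := by
  classical
  have hterm : ∀ i ∈ s, ∀ j ∈ s,
      ∫ x in (0 : ℝ)..π, a i * sin (n i * x) * (b j * sin (n j * x))
        = if i = j then π / 2 * (a i * b i) else 0 := by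
    intro i hi j hj
    have hij : n i = n j ↔ i = j := hinj.eq_iff hi hj
    simp_rw [mul_mul_mul_comm (a i), integral_const_mul,
      integral_sin_int_mul_mul_sin_int_mul (hn i hi) (hn j hj), hij]
    split_ifs with h
    · subst h; ring
    · simp
  have hint : ∀ i j, IntervalIntegrable (fun x => a i * sin (n i * x) * (b j * sin (n j * x)))
      MeasureTheory.volume 0 π := fun i j => by
    apply Continuous.intervalIntegrable
    fun_prop
  simp_rw [sum_mul_sum]
  rw [integral_finsetSum fun i _ => ?_]
  · rw [mul_sum]
    refine sum_congr rfl fun i hi => ?_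
    rw [integral_finsetSum fun j _ => hint i j, sum_congr rfl (hterm i hi), sum_ite_eq s i,
      if_pos hi]
  · apply Continuous.intervalIntegrable
    fun_prop

theorem hasDerivAt_Wk (k : ℕ) (ξ η : ℝ) :
    HasDerivAt (fun ξ => Wk k ξ η)
      ((2 : ℝ) ^ (1 - (k : ℤ)) * ∑ j ∈ range ((k - 1) / 2 + 1),
        (k.choose j : ℝ) * (-((k : ℝ) - 2 * j) * exp (-((k : ℝ) - 2 * j) * ξ)) *
          sin (((k : ℝ) - 2 * j) * η)) ξ := by
  refine .const_mul _ (.fun_sum fun j _ => ?_)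
  exact (((hasDerivAt_id' ξ).const_mul _).exp.const_mul _).mul_const _ |>.congr_deriv (by ring)

theorem two_zpow_one_sub_sq_mul_half {k : ℕ} (hk : 1 ≤ k) :
    ((2 : ℝ) ^ (1 - (k : ℤ))) ^ 2 * (π / 2) = π / 2 ^ (2 * k - 1) := by
  obtain ⟨m, rfl⟩ := Nat.exists_eq_add_of_le' hk
  rw [show 2 * (m + 1) - 1 = 2 * m + 1 by omega, zpow_sub₀ two_ne_zero, zpow_one, zpow_natCast]
  field_simp
  ring

/-- For every integer `k ≥ 1`,
`∫_0^π W_k(0,η)·(∂W_k/∂ξ)(0,η) dη = −(π / 2^{2k-1}) · ∑_{j=0}^{⌊(k-1)/2⌋} (k−2j)·C(k,j)²`. -/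
theorem integral_Wk_mul_partialXi (k : ℕ) (hk : 1 ≤ k) :
    ∫ η in (0:ℝ)..Real.pi, Wk k 0 η * deriv (fun ξ : ℝ => Wk k ξ η) 0
      = -(Real.pi / 2 ^ (2 * k - 1)) *
          ∑ j ∈ Finset.range ((k - 1) / 2 + 1),
            ((k : ℝ) - 2 * j) * (Nat.choose k j : ℝ) ^ 2 := by
  set s := range ((k - 1) / 2 + 1)
  set ν : ℕ → ℤ := fun j => k - 2 * j
  have hν_pos : ∀ j ∈ s, 0 < ν j := fun j hj => by
    simp only [s, ν, mem_range] at hj ⊢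
    omega
  have hν_inj : Set.InjOn ν s := fun i _ j _ h => by
    simp only [ν] at h
    omega
  have hν_cast : ∀ j : ℕ, (ν j : ℝ) = k - 2 * j := by simp [ν]
  have hintegrand : ∀ η, Wk k 0 η * deriv (fun ξ => Wk k ξ η) 0
      = ((2 : ℝ) ^ (1 - (k : ℤ))) ^ 2 * ((∑ j ∈ s, (k.choose j : ℝ) * sin (ν j * η)) *
          ∑ j ∈ s, (k.choose j * -((k : ℝ) - 2 * j)) * sin (ν j * η)) := by
    intro η
    rw [(hasDerivAt_Wk k 0 η).deriv]
    simp only [Wk, hν_cast, mul_zero, exp_zero, mul_one]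
    ring
  rw [integral_congr fun η _ => hintegrand η, integral_const_mul, integral_sum_sin_mul_sum_sin hν_pos hν_inj,
    ← mul_assoc, two_zpow_one_sub_sq_mul_half hk, mul_sum, mul_sum]
  exact sum_congr rfl fun j _ => by ring
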